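/- arXiv:2005.08758 — 3 statements merged into one kernel-verified Lean document; each statement's English description precedes it below -/
import Mathlib

section
/- Let P be a finite collection of cells of ℕ² contained in the interval [(1,1),(m,n)], let S be its associated polynomial ring over a field K, let I_P ⊆ S be the ideal generated by the inner 2-minors of P, and let I_Λ be the lattice ideal of the lattice Λ generated by the vectors c_1,…,c_r attached to the cells of P. Then there exists a monomial u ∈ S such that I_Λ = (I_P : u). -/
namespace PolyominoPaper

open MvPolynomial

/-- A point of `ℕ²`.  A cell is identified with its lower left corner. -/
abbrev Pt : Type := ℕ × ℕ

/-- The four vertices of the unit cell with lower left corner `c`. -/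
def cellVerts (c : Pt) : Finset Pt :=
  {c, (c.1 + 1, c.2), (c.1, c.2 + 1), (c.1 + 1, c.2 + 1)}

/-- The vertex set `V(P)` of a finite collection of cells `P`. -/
def vertexSet (P : Finset Pt) : Finset Pt := P.biUnion cellVerts

/-- Two cells share an edge. -/
def CellAdj (c d : Pt) : Prop :=
  (c.1 = d.1 ∧ (c.2 + 1 = d.2 ∨ d.2 + 1 = c.2)) ∨
  (c.2 = d.2 ∧ (c.1 + 1 = d.1 ∨ d.1 + 1 = c.1))

/-- A polyomino: a nonempty finite collection of cells, any two of which are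
connected through a sequence of edge-adjacent cells of `P`. -/
def IsPolyomino (P : Finset Pt) : Prop :=
  P.Nonempty ∧ ∀ c ∈ P, ∀ d ∈ P,
    Relation.ReflTransGen (fun x y => y ∈ P ∧ CellAdj x y) c d

/-- `[a,b]` is an inner interval of `P`: it is a proper interval and all its
cells belong to `P` (cells are given by their lower left corners `e`). -/
def IsInnerInterval (P : Finset Pt) (a b : Pt) : Prop :=
  a.1 < b.1 ∧ a.2 < b.2 ∧
    ∀ e : Pt, a.1 ≤ e.1 → e.1 < b.1 → a.2 ≤ e.2 → e.2 < b.2 → e ∈ P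

/-- A collection of cells is thin if it does not contain the four cells of a
`2 × 2` square. -/
def IsThin (P : Finset Pt) : Prop :=
  ¬ ∃ w : Pt, w ∈ P ∧ (w.1 + 1, w.2) ∈ P ∧ (w.1, w.2 + 1) ∈ P ∧
      (w.1 + 1, w.2 + 1) ∈ P

/-- A maximal inner interval of `P`: an inner interval not properly contained
in another inner interval of `P`. -/
def IsMaxInnerInterval (P : Finset Pt) (a b : Pt) : Prop :=
  IsInnerInterval P a b ∧
    ∀ a' b' : Pt, IsInnerInterval P a' b' →
      a'.1 ≤ a.1 → a'.2 ≤ a.2 → b.1 ≤ b'.1 → b.2 ≤ b'.2 → a = a' ∧ b = b'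

/-- The inner 2-minor `x_a x_b - x_c x_d` attached to the interval `[a,b]`,
where `c, d` are the anti-diagonal corners of `[a,b]`. -/
noncomputable def innerMinor (K : Type*) [Field K] (a b : Pt) :
    MvPolynomial Pt K :=
  X a * X b - X (a.1, b.2) * X (b.1, a.2)

/-- The set `M` of inner 2-minors of `P`. -/
def innerMinors (K : Type*) [Field K] (P : Finset Pt) :
    Set (MvPolynomial Pt K) :=
  {f | ∃ a b : Pt, IsInnerInterval P a b ∧ f = innerMinor K a b}

/-- The polyomino ideal `I_P`, generated by the inner 2-minors of `P`. -/
noncomputable def polyIdeal (K : Type*) [Field K] (P : Finset Pt) :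
    Ideal (MvPolynomial Pt K) :=
  Ideal.span (innerMinors K P)

/-- Total degree of a monomial (exponent vector). -/
def mdeg (m : Pt →₀ ℕ) : ℕ := m.sum fun _ e => e

/-- The graded reverse lexicographic (strict) order on monomials induced by a
total order `vlt` on the variables (`vlt a b` meaning `a` is smaller than `b`):
`m₁ < m₂` iff `deg m₁ < deg m₂`, or the degrees agree and the smallest
variable in which they differ has a larger exponent in `m₁`. -/
def GrevlexLt (vlt : Pt → Pt → Prop) (m₁ m₂ : Pt →₀ ℕ) : Prop :=
  mdeg m₁ < mdeg m₂ ∨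
    (mdeg m₁ = mdeg m₂ ∧ ∃ v : Pt, m₂ v < m₁ v ∧ ∀ w : Pt, vlt w v → m₁ w = m₂ w)

/-- `m` is the leading monomial of `f` with respect to the strict monomial
order `mlt`. -/
def IsLeadMon {K : Type*} [Field K] (mlt : (Pt →₀ ℕ) → (Pt →₀ ℕ) → Prop)
    (f : MvPolynomial Pt K) (m : Pt →₀ ℕ) : Prop :=
  m ∈ f.support ∧ ∀ m' ∈ f.support, m' ≠ m → mlt m' m

/-- The ideal generated by the leading monomials of the members of `F`. -/
noncomputable def lmIdeal {K : Type*} [Field K]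
    (mlt : (Pt →₀ ℕ) → (Pt →₀ ℕ) → Prop) (F : Set (MvPolynomial Pt K)) :
    Ideal (MvPolynomial Pt K) :=
  Ideal.span {p | ∃ f ∈ F, ∃ m : Pt →₀ ℕ, IsLeadMon mlt f m ∧
    p = monomial m (1 : K)}

/-- `G` is a Gröbner basis of `I` with respect to the monomial order `mlt`. -/
def IsGroebnerBasis {K : Type*} [Field K]
    (mlt : (Pt →₀ ℕ) → (Pt →₀ ℕ) → Prop) (G : Set (MvPolynomial Pt K))
    (I : Ideal (MvPolynomial Pt K)) : Prop :=
  (∀ g ∈ G, g ∈ I) ∧ lmIdeal mlt G = lmIdeal mlt (I : Set (MvPolynomial Pt K))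

/-- `G` is a reduced Gröbner basis of `I` with respect to `mlt`: it is a
Gröbner basis, every element is monic, and no monomial occurring in an element
of `G` is divisible by the leading monomial of a different element of `G`. -/
def IsReducedGroebnerBasis {K : Type*} [Field K]
    (mlt : (Pt →₀ ℕ) → (Pt →₀ ℕ) → Prop) (G : Set (MvPolynomial Pt K))
    (I : Ideal (MvPolynomial Pt K)) : Prop :=
  IsGroebnerBasis mlt G I ∧
    (∀ g ∈ G, ∀ m : Pt →₀ ℕ, IsLeadMon mlt g m → MvPolynomial.coeff m g = 1) ∧
    (∀ g ∈ G, ∀ g' ∈ G, g' ≠ g → ∀ m ∈ g.support, ∀ m' : Pt →₀ ℕ,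
      IsLeadMon mlt g' m' → ¬ m' ≤ m)

/-- The eight total orders `<^1, …, <^8` on the vertices, as in Table 1 of the
paper; e.g. `a <^1 b` iff `a₁ < b₁` or (`a₁ = b₁` and `a₂ > b₂`), and
`a <^5 b` iff `a₂ < b₂` or (`a₂ = b₂` and `a₁ > b₁`). -/
def vord : ℕ → Pt → Pt → Prop
  | 1 => fun a b => a.1 < b.1 ∨ (a.1 = b.1 ∧ b.2 < a.2)
  | 2 => fun a b => b.1 < a.1 ∨ (a.1 = b.1 ∧ b.2 < a.2)
  | 3 => fun a b => b.1 < a.1 ∨ (a.1 = b.1 ∧ a.2 < b.2)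
  | 4 => fun a b => a.1 < b.1 ∨ (a.1 = b.1 ∧ a.2 < b.2)
  | 5 => fun a b => a.2 < b.2 ∨ (a.2 = b.2 ∧ b.1 < a.1)
  | 6 => fun a b => a.2 < b.2 ∨ (a.2 = b.2 ∧ a.1 < b.1)
  | 7 => fun a b => b.2 < a.2 ∨ (a.2 = b.2 ∧ a.1 < b.1)
  | 8 => fun a b => b.2 < a.2 ∨ (a.2 = b.2 ∧ b.1 < a.1)
  | _ => fun _ _ => False

/-- The cyclic shift of a total order `vlt` making `v` the smallest element:
first come `v` and the elements above `v`, in the old order, then the elements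
below `v`, in the old order. -/
def vordShift (vlt : Pt → Pt → Prop) (v : Pt) : Pt → Pt → Prop :=
  fun a b => (¬ vlt a v ∧ vlt b v) ∨ ((vlt a v ↔ vlt b v) ∧ vlt a b)

/-- The condition `π_k` (for `k = 1, …, 8`) at a vertex `v` of `P`, i.e. one of
the two forbidden configurations (I), (II) of Table 2 of the paper occurs at
`v`; `π₁` is as in Definition 2.2, and `π_k` is obtained from `π₁` by the
symmetry of the plane carrying the order `<^1` to `<^k`. -/
def SatisfiesPi (P : Finset Pt) (k : ℕ) (v : Pt) : Prop :=
  ∃ x₁ x₂ x₃ y₁ y₂ y₃ : ℕ, x₁ < x₂ ∧ x₂ < x₃ ∧ y₁ < y₂ ∧ y₂ < y₃ ∧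
    (match k with
      | 1 =>
        (v = (x₁, y₂) ∧
          IsInnerInterval P (x₁, y₁) (x₂, y₂) ∧
          IsInnerInterval P (x₂, y₂) (x₃, y₃) ∧
          IsInnerInterval P (x₁, y₂) (x₃, y₃) ∧
          ¬ IsInnerInterval P (x₁, y₁) (x₃, y₂)) ∨
        (v = (x₂, y₂) ∧
          IsInnerInterval P (x₁, y₂) (x₂, y₃) ∧
          IsInnerInterval P (x₂, y₁) (x₃, y₂) ∧
          IsInnerInterval P (x₂, y₂) (x₃, y₃) ∧
          ¬ IsInnerInterval P (x₁, y₁) (x₂, y₂))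
      | 2 =>
        (v = (x₃, y₂) ∧
          IsInnerInterval P (x₂, y₁) (x₃, y₂) ∧
          IsInnerInterval P (x₁, y₂) (x₂, y₃) ∧
          IsInnerInterval P (x₁, y₂) (x₃, y₃) ∧
          ¬ IsInnerInterval P (x₁, y₁) (x₃, y₂)) ∨
        (v = (x₂, y₂) ∧
          IsInnerInterval P (x₂, y₂) (x₃, y₃) ∧
          IsInnerInterval P (x₁, y₁) (x₂, y₂) ∧
          IsInnerInterval P (x₁, y₂) (x₂, y₃) ∧
          ¬ IsInnerInterval P (x₂, y₁) (x₃, y₂))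
      | 3 =>
        (v = (x₃, y₂) ∧
          IsInnerInterval P (x₂, y₂) (x₃, y₃) ∧
          IsInnerInterval P (x₁, y₁) (x₂, y₂) ∧
          IsInnerInterval P (x₁, y₁) (x₃, y₂) ∧
          ¬ IsInnerInterval P (x₁, y₂) (x₃, y₃)) ∨
        (v = (x₂, y₂) ∧
          IsInnerInterval P (x₂, y₁) (x₃, y₂) ∧
          IsInnerInterval P (x₁, y₂) (x₂, y₃) ∧
          IsInnerInterval P (x₁, y₁) (x₂, y₂) ∧
          ¬ IsInnerInterval P (x₂, y₂) (x₃, y₃))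
      | 4 =>
        (v = (x₁, y₂) ∧
          IsInnerInterval P (x₁, y₂) (x₂, y₃) ∧
          IsInnerInterval P (x₂, y₁) (x₃, y₂) ∧
          IsInnerInterval P (x₁, y₁) (x₃, y₂) ∧
          ¬ IsInnerInterval P (x₁, y₂) (x₃, y₃)) ∨
        (v = (x₂, y₂) ∧
          IsInnerInterval P (x₁, y₁) (x₂, y₂) ∧
          IsInnerInterval P (x₂, y₂) (x₃, y₃) ∧
          IsInnerInterval P (x₂, y₁) (x₃, y₂) ∧
          ¬ IsInnerInterval P (x₁, y₂) (x₂, y₃))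
      | 5 =>
        (v = (x₂, y₁) ∧
          IsInnerInterval P (x₁, y₁) (x₂, y₂) ∧
          IsInnerInterval P (x₂, y₂) (x₃, y₃) ∧
          IsInnerInterval P (x₂, y₁) (x₃, y₃) ∧
          ¬ IsInnerInterval P (x₁, y₁) (x₂, y₃)) ∨
        (v = (x₂, y₂) ∧
          IsInnerInterval P (x₂, y₁) (x₃, y₂) ∧
          IsInnerInterval P (x₁, y₂) (x₂, y₃) ∧
          IsInnerInterval P (x₂, y₂) (x₃, y₃) ∧
          ¬ IsInnerInterval P (x₁, y₁) (x₂, y₂))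
      | 6 =>
        (v = (x₂, y₃) ∧
          IsInnerInterval P (x₁, y₂) (x₂, y₃) ∧
          IsInnerInterval P (x₂, y₁) (x₃, y₂) ∧
          IsInnerInterval P (x₂, y₁) (x₃, y₃) ∧
          ¬ IsInnerInterval P (x₁, y₁) (x₂, y₃)) ∨
        (v = (x₂, y₂) ∧
          IsInnerInterval P (x₂, y₂) (x₃, y₃) ∧
          IsInnerInterval P (x₁, y₁) (x₂, y₂) ∧
          IsInnerInterval P (x₂, y₁) (x₃, y₂) ∧
          ¬ IsInnerInterval P (x₁, y₂) (x₂, y₃))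
      | 7 =>
        (v = (x₂, y₃) ∧
          IsInnerInterval P (x₂, y₂) (x₃, y₃) ∧
          IsInnerInterval P (x₁, y₁) (x₂, y₂) ∧
          IsInnerInterval P (x₁, y₁) (x₂, y₃) ∧
          ¬ IsInnerInterval P (x₂, y₁) (x₃, y₃)) ∨
        (v = (x₂, y₂) ∧
          IsInnerInterval P (x₁, y₂) (x₂, y₃) ∧
          IsInnerInterval P (x₂, y₁) (x₃, y₂) ∧
          IsInnerInterval P (x₁, y₁) (x₂, y₂) ∧
          ¬ IsInnerInterval P (x₂, y₂) (x₃, y₃))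
      | 8 =>
        (v = (x₂, y₁) ∧
          IsInnerInterval P (x₂, y₁) (x₃, y₂) ∧
          IsInnerInterval P (x₁, y₂) (x₂, y₃) ∧
          IsInnerInterval P (x₁, y₁) (x₂, y₃) ∧
          ¬ IsInnerInterval P (x₂, y₁) (x₃, y₃)) ∨
        (v = (x₂, y₂) ∧
          IsInnerInterval P (x₁, y₁) (x₂, y₂) ∧
          IsInnerInterval P (x₂, y₂) (x₃, y₃) ∧
          IsInnerInterval P (x₁, y₂) (x₂, y₃) ∧
          ¬ IsInnerInterval P (x₂, y₁) (x₃, y₂))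
      | _ => False)

/-- The vector `c_C ∈ ℤ^{V}` attached to the cell with lower left corner `c`. -/
noncomputable def cellVec (c : Pt) : Pt →₀ ℤ :=
  Finsupp.single c 1 + Finsupp.single (c.1 + 1, c.2 + 1) 1
    - Finsupp.single (c.1 + 1, c.2) 1 - Finsupp.single (c.1, c.2 + 1) 1

/-- The lattice `Λ` generated by the vectors attached to the cells of `P`. -/
noncomputable def latticeOf (P : Finset Pt) : AddSubgroup (Pt →₀ ℤ) :=
  AddSubgroup.closure (cellVec '' ↑P)

/-- Positive part of an integer vector, kept with integer values. -/
noncomputable def intPosPart (u : Pt →₀ ℤ) : Pt →₀ ℤ :=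
  Finsupp.mapRange (fun z => max z 0) (by simp) u

/-- Positive part `u⁺` of an integer vector, as an exponent vector. -/
noncomputable def natPosPart (u : Pt →₀ ℤ) : Pt →₀ ℕ :=
  Finsupp.mapRange Int.toNat Int.toNat_zero u

/-- Negative part `u⁻` of an integer vector, as an exponent vector. -/
noncomputable def natNegPart (u : Pt →₀ ℤ) : Pt →₀ ℕ := natPosPart (-u)

/-- The binomial `x^{u⁺} - x^{u⁻}` attached to an integer vector `u`. -/
noncomputable def latticeBinomial (K : Type*) [Field K] (u : Pt →₀ ℤ) :
    MvPolynomial Pt K :=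
  monomial (natPosPart u) 1 - monomial (natNegPart u) 1

/-- The lattice ideal `I_Λ` of the lattice attached to `P`. -/
noncomputable def latticeIdeal (K : Type*) [Field K] (P : Finset Pt) :
    Ideal (MvPolynomial Pt K) :=
  Ideal.span {f | ∃ u ∈ latticeOf P, f = latticeBinomial K u}

/-- A thin cycle: a thin polyomino whose cells can be arranged in a cyclic
path `C₁, …, Cₙ` of pairwise distinct edge-adjacent cells (with `C₁` and `Cₙ`
sharing an edge), cells at cyclic distance at least `3` being disjoint. -/
def IsThinCycle (P : Finset Pt) : Prop :=
  IsPolyomino P ∧ IsThin P ∧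
    ∃ n : ℕ, 0 < n ∧ ∃ c : ZMod n → Pt,
      Function.Injective c ∧ (∀ i, c i ∈ P) ∧ (∀ p ∈ P, ∃ i, c i = p) ∧
      (∀ i, CellAdj (c i) (c (i + 1))) ∧
      (∀ i j : ZMod n, j ≠ i → j ≠ i + 1 → j ≠ i + 2 → j ≠ i - 1 → j ≠ i - 2 →
        cellVerts (c i) ∩ cellVerts (c j) = ∅)

/-- A grid polyomino (Definition 4.8 of the paper). -/
def IsGridPolyomino (P : Finset Pt) : Prop :=
  IsPolyomino P ∧
    ∃ (m n r s : ℕ) (a b : ℕ → ℕ → Pt),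
      (∀ i ∈ Finset.Icc 1 r, ∀ j ∈ Finset.Icc 1 s,
        1 < (a i j).1 ∧ (a i j).1 < (b i j).1 ∧ (b i j).1 < m ∧
        1 < (a i j).2 ∧ (a i j).2 < (b i j).2 ∧ (b i j).2 < n) ∧
      (∀ i ∈ Finset.Icc 1 r, ∀ l ∈ Finset.Icc 1 s, ∀ k ∈ Finset.Icc 1 s,
        (a i l).1 = (a i k).1 ∧ (b i l).1 = (b i k).1) ∧
      (∀ j ∈ Finset.Icc 1 s, ∀ l ∈ Finset.Icc 1 r, ∀ k ∈ Finset.Icc 1 r,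
        (a l j).2 = (a k j).2 ∧ (b l j).2 = (b k j).2) ∧
      (∀ i ∈ Finset.Icc 1 (r - 1), ∀ j ∈ Finset.Icc 1 (s - 1),
        (a (i + 1) j).1 = (b i j).1 + 1 ∧ (a i (j + 1)).2 = (b i j).2 + 1) ∧
      P = Finset.Icc ((1, 1) : Pt) (m - 1, n - 1) \
            ((Finset.Icc 1 r ×ˢ Finset.Icc 1 s).biUnion fun ij =>
              Finset.Icc (a ij.1 ij.2)
                ((b ij.1 ij.2).1 - 1, (b ij.1 ij.2).2 - 1))

/-- The cell with lower left corner `c` is properly contained in the interval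
`[a, b]`. -/
def CellProperlyInInterval (a b c : Pt) : Prop :=
  a.1 ≤ c.1 ∧ a.2 ≤ c.2 ∧ c.1 + 1 ≤ b.1 ∧ c.2 + 1 ≤ b.2 ∧
    ¬(a = c ∧ b = (c.1 + 1, c.2 + 1))

/-- The cell `c` is properly contained in exactly one maximal inner interval
of `P` (membership in the set `P₁` of Definition 4.10). -/
def InExactlyOneMaxInterval (P : Finset Pt) (c : Pt) : Prop :=
  ∃! ab : Pt × Pt, IsMaxInnerInterval P ab.1 ab.2 ∧
    CellProperlyInInterval ab.1 ab.2 c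

/-- `P'` is a subgrid polyomino of the grid polyomino `P`: it is a polyomino
obtained from `P` by deleting cells each of which is properly contained in
exactly one maximal inner interval of `P`. -/
def IsSubgridOf (P' P : Finset Pt) : Prop :=
  IsGridPolyomino P ∧ P' ⊆ P ∧
    (∀ c ∈ P, c ∉ P' → InExactlyOneMaxInterval P c) ∧ IsPolyomino P'

/-!
The monomial map `x_v ↦ [e_v]` from `S` to the group algebra `K[ℤ^V / Λ]` has kernel `I_Λ` and
sends monomials to units; hence `I_Λ` is saturated with respect to monomials. Conversely, the
binomial of each generator `c_k` is an inner 2-minor, and the vectors `u` whose binomial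
`x^{u⁺} - x^{u⁻}` lies in a monomially saturated ideal form a subgroup; so `I_Λ` lies in the
monomial saturation of `I_P`. Every binomial of `Λ` only involves the finitely many variables of
`V(P)`, so `I_Λ` is finitely generated and a single monomial `u` multiplies all of `I_Λ` into
`I_P`. Then `I_Λ ⊆ (I_P : u) ⊆ (I_Λ : u) = I_Λ`.
-/

end PolyominoPaper

theorem AddMonoidAlgebra.isUnit_single_one {R G : Type*} [Semiring R] [AddCommGroup G] (a : G) :
    IsUnit (AddMonoidAlgebra.single a (1 : R)) :=
  ⟨⟨_, AddMonoidAlgebra.single (-a) 1, by simp [AddMonoidAlgebra.one_def],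
    by simp [AddMonoidAlgebra.one_def]⟩, rfl⟩

namespace MvPolynomial

section MonomialSaturation

variable {σ R : Type*} [CommSemiring R]

def IsMonomialSaturated (J : Ideal (MvPolynomial σ R)) : Prop :=
  ∀ (m : σ →₀ ℕ) (f : MvPolynomial σ R), monomial m 1 * f ∈ J → f ∈ J

noncomputable def monomialSaturation (I : Ideal (MvPolynomial σ R)) :
    Ideal (MvPolynomial σ R) :=
  ⨆ m : σ →₀ ℕ, I.colon (Ideal.span {monomial m (1 : R)})

theorem directed_colon_monomial (I : Ideal (MvPolynomial σ R)) :
    Directed (· ≤ ·) fun m : σ →₀ ℕ => I.colon (Ideal.span {monomial m (1 : R)}) := by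
  intro m₁ m₂
  refine ⟨m₁ + m₂, fun f hf => ?_, fun f hf => ?_⟩ <;>
    rw [Ideal.mem_colon_span_singleton] at hf ⊢
  · simpa [monomial_mul, mul_assoc] using I.mul_mem_right (monomial m₂ 1) hf
  · simpa [monomial_mul, mul_assoc, add_comm m₁] using I.mul_mem_right (monomial m₁ 1) hf

theorem mem_monomialSaturation {I : Ideal (MvPolynomial σ R)} {f : MvPolynomial σ R} :
    f ∈ monomialSaturation I ↔ ∃ m, monomial m 1 * f ∈ I := by
  rw [monomialSaturation, Submodule.mem_iSup_of_directed _ (directed_colon_monomial I)]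
  simp only [Ideal.mem_colon_span_singleton, mul_comm f]

theorem le_monomialSaturation (I : Ideal (MvPolynomial σ R)) : I ≤ monomialSaturation I :=
  fun f hf => mem_monomialSaturation.2 ⟨0, by simpa using hf⟩

theorem isMonomialSaturated_monomialSaturation (I : Ideal (MvPolynomial σ R)) :
    IsMonomialSaturated (monomialSaturation I) := by
  intro m f h
  obtain ⟨m', hm'⟩ := mem_monomialSaturation.1 h
  exact mem_monomialSaturation.2 ⟨m' + m, by rwa [← mul_one (1 : R), ← monomial_mul, mul_assoc]⟩

theorem exists_le_colon_monomial_of_fg {I J : Ideal (MvPolynomial σ R)} (hJ : J.FG)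
    (h : J ≤ monomialSaturation I) :
    ∃ m : σ →₀ ℕ, J ≤ I.colon (Ideal.span {monomial m (1 : R)}) := by
  obtain ⟨-, ⟨m, rfl⟩, hm⟩ :=
    (CompleteLattice.isCompactElement_iff_le_of_directed_sSup_le _ J).1
      ((Submodule.fg_iff_compact J).1 hJ) _ (Set.range_nonempty _)
      (directedOn_range.2 (directed_colon_monomial I)) (by rwa [sSup_range])
  exact ⟨m, hm⟩

end MonomialSaturation

variable {σ R : Type*} [CommRing R]

theorem ker_mapDomainRingHom_le_span {G : Type*} [AddCommMonoid G] (g : (σ →₀ ℕ) →+ G) :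
    RingHom.ker (AddMonoidAlgebra.mapDomainRingHom R g : MvPolynomial σ R →+* _) ≤
      Ideal.span {f | ∃ a b, g a = g b ∧ f = monomial a 1 - monomial b 1} := by
  classical
  set J :=
    Ideal.span {f : MvPolynomial σ R | ∃ a b, g a = g b ∧ f = monomial a 1 - monomial b 1}
  -- `ψ` sends each class to a chosen monomial in its fibre under `g`, so `p` and `ψ` of the image
  -- of `p` differ by a combination of binomials of `J`; on the kernel that image is `0`.
  let ψ : AddMonoidAlgebra R G → MvPolynomial σ R :=
    AddMonoidAlgebra.mapDomain (Function.invFun g)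
  have sub_mem : ∀ p, p - ψ (AddMonoidAlgebra.mapDomainRingHom R g p) ∈ J := by
    intro p
    induction p using MvPolynomial.induction_on' with
    | monomial a c =>
      have hrep : g (Function.invFun g (g a)) = g a := Function.invFun_eq ⟨a, rfl⟩
      have h := J.mul_mem_left (C c) (Ideal.subset_span ⟨a, _, hrep.symm, rfl⟩)
      rw [mul_sub, C_mul_monomial, C_mul_monomial, mul_one] at h
      convert h using 2
      simp [ψ, ← single_eq_monomial]
    | add p q hp hq =>
      simpa [ψ, AddMonoidAlgebra.mapDomain_add, add_sub_add_comm] using J.add_mem hp hq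
  intro f hf
  simpa [RingHom.mem_ker.1 hf, ψ] using sub_mem f

theorem _root_.Ideal.span_fg_of_vars_subset [IsNoetherianRing R] (W : Finset σ)
    {s : Set (MvPolynomial σ R)} (hs : ∀ p ∈ s, p.vars ⊆ W) : (Ideal.span s).FG := by
  let ι : MvPolynomial W R →+* MvPolynomial σ R := (rename Subtype.val).toRingHom
  have hs' : s ⊆ Set.range ι := fun p hp =>
    exists_rename_eq_of_vars_subset_range p _ Subtype.val_injective (by simpa using hs p hp)
  rw [← Set.image_preimage_eq_of_subset hs', ← Ideal.map_span]
  exact Ideal.FG.map (IsNoetherian.noetherian _) ι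

end MvPolynomial

namespace PolyominoPaper

open MvPolynomial

section LatticeBinomials

variable {K : Type*} [Field K]

noncomputable def natCastVec : (Pt →₀ ℕ) →+ (Pt →₀ ℤ) :=
  Finsupp.mapRange.addMonoidHom (Nat.castAddMonoidHom ℤ)

@[simp]
theorem natCastVec_apply (a : Pt →₀ ℕ) (x : Pt) : natCastVec a x = a x := rfl

@[simp]
theorem natPosPart_apply (u : Pt →₀ ℤ) (x : Pt) : natPosPart u x = (u x).toNat := rfl

@[simp]
theorem natNegPart_apply (u : Pt →₀ ℤ) (x : Pt) : natNegPart u x = (-u x).toNat := rfl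

theorem natCastVec_natPosPart_sub_natNegPart (u : Pt →₀ ℤ) :
    natCastVec (natPosPart u) - natCastVec (natNegPart u) = u := by
  ext x
  simp only [Finsupp.sub_apply, natCastVec_apply, natPosPart_apply, natNegPart_apply]
  omega

theorem latticeBinomial_neg (u : Pt →₀ ℤ) :
    latticeBinomial K (-u) = -latticeBinomial K u := by
  have h₁ : natPosPart (-u) = natNegPart u := rfl
  have h₂ : natNegPart (-u) = natPosPart u := by rw [natNegPart, neg_neg]
  rw [latticeBinomial, latticeBinomial, h₁, h₂, neg_sub]

-- The common factor is `x^c` with `c = min a b = a - (a - b)⁺`.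
theorem monomial_sub_eq_monomial_mul_latticeBinomial (a b : Pt →₀ ℕ) :
    (monomial a 1 - monomial b 1 : MvPolynomial Pt K) =
      monomial (a - natPosPart (natCastVec a - natCastVec b)) 1 *
        latticeBinomial K (natCastVec a - natCastVec b) := by
  have h₁ : a - natPosPart (natCastVec a - natCastVec b) +
      natPosPart (natCastVec a - natCastVec b) = a := by
    ext x; simp only [Finsupp.add_apply, Finsupp.tsub_apply, natPosPart_apply,
      Finsupp.sub_apply, natCastVec_apply]; omega
  have h₂ : a - natPosPart (natCastVec a - natCastVec b) +
      natNegPart (natCastVec a - natCastVec b) = b := by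
    ext x; simp only [Finsupp.add_apply, Finsupp.tsub_apply, natPosPart_apply,
      natNegPart_apply, Finsupp.sub_apply, natCastVec_apply]; omega
  rw [latticeBinomial, mul_sub, monomial_mul, monomial_mul, one_mul, h₁, h₂]

theorem latticeBinomial_mem_of_monomial_sub_mem {J : Ideal (MvPolynomial Pt K)}
    (hJ : IsMonomialSaturated J) {a b : Pt →₀ ℕ}
    (h : monomial a 1 - monomial b 1 ∈ J) :
    latticeBinomial K (natCastVec a - natCastVec b) ∈ J :=
  hJ _ _ (monomial_sub_eq_monomial_mul_latticeBinomial (K := K) a b ▸ h)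

noncomputable def binomialIdeal (K : Type*) [Field K] (L : AddSubgroup (Pt →₀ ℤ)) :
    Ideal (MvPolynomial Pt K) :=
  Ideal.span {f | ∃ u ∈ L, f = latticeBinomial K u}

theorem latticeIdeal_eq_binomialIdeal (P : Finset Pt) :
    latticeIdeal K P = binomialIdeal K (latticeOf P) := rfl

theorem binomialIdeal_closure_le {J : Ideal (MvPolynomial Pt K)}
    (hJ : IsMonomialSaturated J) {s : Set (Pt →₀ ℤ)}
    (hs : ∀ u ∈ s, latticeBinomial K u ∈ J) : binomialIdeal K (AddSubgroup.closure s) ≤ J := by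
  refine Ideal.span_le.2 ?_
  rintro _ ⟨u, hu, rfl⟩
  induction hu using AddSubgroup.closure_induction with
  | mem u hu => exact hs u hu
  | zero => simp [latticeBinomial, natNegPart]
  | add u v _ _ hu hv =>
    -- `x^{u⁺+v⁺} - x^{u⁻+v⁻} = x^{v⁺} (x^{u⁺} - x^{u⁻}) + x^{u⁻} (x^{v⁺} - x^{v⁻})`
    have h : monomial (natPosPart u + natPosPart v) 1 -
        monomial (natNegPart u + natNegPart v) 1 ∈ J := by
      convert J.add_mem (J.mul_mem_left (monomial (natPosPart v) 1) hu)
        (J.mul_mem_left (monomial (natNegPart u) 1) hv) using 1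
      simp only [latticeBinomial, mul_sub, monomial_mul, mul_one]
      rw [add_comm (natPosPart v), add_comm (natNegPart u) (natPosPart v)]
      abel
    simpa only [map_add, add_sub_add_comm, natCastVec_natPosPart_sub_natNegPart,
      SetLike.mem_coe] using latticeBinomial_mem_of_monomial_sub_mem hJ h
  | neg u _ hu => simpa [latticeBinomial_neg] using hu

theorem monomial_sub_mem_binomialIdeal {L : AddSubgroup (Pt →₀ ℤ)} {a b : Pt →₀ ℕ}
    (h : natCastVec a - natCastVec b ∈ L) :
    (monomial a 1 - monomial b 1 : MvPolynomial Pt K) ∈ binomialIdeal K L := by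
  rw [monomial_sub_eq_monomial_mul_latticeBinomial]
  exact Ideal.mul_mem_left _ _ (Ideal.subset_span ⟨_, h, rfl⟩)

noncomputable def latticeClass (L : AddSubgroup (Pt →₀ ℤ)) : (Pt →₀ ℕ) →+ (Pt →₀ ℤ) ⧸ L :=
  (QuotientAddGroup.mk' L).comp natCastVec

theorem latticeClass_eq_iff {L : AddSubgroup (Pt →₀ ℤ)} {a b : Pt →₀ ℕ} :
    latticeClass L a = latticeClass L b ↔ natCastVec a - natCastVec b ∈ L :=
  QuotientAddGroup.eq_iff_sub_mem

theorem binomialIdeal_eq_ker (L : AddSubgroup (Pt →₀ ℤ)) :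
    binomialIdeal K L =
      RingHom.ker (AddMonoidAlgebra.mapDomainRingHom K (latticeClass L) :
        MvPolynomial Pt K →+* _) := by
  refine le_antisymm (Ideal.span_le.2 ?_) ((ker_mapDomainRingHom_le_span _).trans
    (Ideal.span_le.2 ?_))
  · rintro _ ⟨u, hu, rfl⟩
    have h : latticeClass L (natPosPart u) = latticeClass L (natNegPart u) :=
      latticeClass_eq_iff.2 (by rwa [natCastVec_natPosPart_sub_natNegPart])
    simp only [SetLike.mem_coe, RingHom.mem_ker, latticeBinomial, map_sub, ← single_eq_monomial,
      AddMonoidAlgebra.mapDomainRingHom_apply, AddMonoidAlgebra.mapDomain_single, h, sub_self]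
  · rintro _ ⟨a, b, hab, rfl⟩
    exact monomial_sub_mem_binomialIdeal (latticeClass_eq_iff.1 hab)

-- The monomial map sends `x^m` to a unit of the group algebra of `ℤ^V / L`.
theorem isMonomialSaturated_binomialIdeal (L : AddSubgroup (Pt →₀ ℤ)) :
    IsMonomialSaturated (binomialIdeal K L) := by
  intro m f h
  rw [binomialIdeal_eq_ker, RingHom.mem_ker, map_mul, ← single_eq_monomial,
    AddMonoidAlgebra.mapDomainRingHom_apply, AddMonoidAlgebra.mapDomain_single] at h
  rw [binomialIdeal_eq_ker, RingHom.mem_ker]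
  exact (AddMonoidAlgebra.isUnit_single_one _).mul_right_eq_zero.1 h

theorem vars_latticeBinomial_subset (u : Pt →₀ ℤ) :
    (latticeBinomial K u).vars ⊆ u.support := by
  classical
  refine Finset.Subset.trans (vars_sub_subset _) (Finset.union_subset ?_ ?_) <;>
    · intro x hx
      simp only [vars_monomial one_ne_zero, Finsupp.mem_support_iff, natPosPart_apply,
        natNegPart_apply] at hx ⊢
      omega

theorem binomialIdeal_fg {L : AddSubgroup (Pt →₀ ℤ)} (W : Finset Pt)
    (hL : ∀ u ∈ L, u.support ⊆ W) : (binomialIdeal K L).FG :=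
  Ideal.span_fg_of_vars_subset W <| by
    rintro _ ⟨u, hu, rfl⟩
    exact (vars_latticeBinomial_subset u).trans (hL u hu)

end LatticeBinomials

section Polyomino

variable {K : Type*} [Field K] {P : Finset Pt}

noncomputable def rectVec (a b : Pt) : Pt →₀ ℤ :=
  Finsupp.single a 1 + Finsupp.single b 1 - Finsupp.single (a.1, b.2) 1 -
    Finsupp.single (b.1, a.2) 1

theorem cellVec_eq_rectVec (c : Pt) : cellVec c = rectVec c (c.1 + 1, c.2 + 1) := by
  rw [cellVec, rectVec]
  abel

theorem sum_cellVec_eq_rectVec {a b : Pt} (h₁ : a.1 ≤ b.1) (h₂ : a.2 ≤ b.2) :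
    ∑ i ∈ Finset.Ico a.1 b.1, ∑ j ∈ Finset.Ico a.2 b.2, cellVec (i, j) = rectVec a b := by
  let e : ℕ → ℕ → Pt →₀ ℤ := fun i j => Finsupp.single (i, j) 1
  have column : ∀ i, ∑ j ∈ Finset.Ico a.2 b.2, cellVec (i, j) =
      (e (i + 1) b.2 - e i b.2) - (e (i + 1) a.2 - e i a.2) := by
    intro i
    rw [← Finset.sum_Ico_sub (f := fun j => e (i + 1) j - e i j) h₂]
    refine Finset.sum_congr rfl fun j _ => ?_
    simp only [cellVec, e]
    abel
  calc ∑ i ∈ Finset.Ico a.1 b.1, ∑ j ∈ Finset.Ico a.2 b.2, cellVec (i, j)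
      = ∑ i ∈ Finset.Ico a.1 b.1, ((e (i + 1) b.2 - e (i + 1) a.2) - (e i b.2 - e i a.2)) :=
        Finset.sum_congr rfl fun i _ => by rw [column]; abel
    _ = (e b.1 b.2 - e b.1 a.2) - (e a.1 b.2 - e a.1 a.2) :=
        Finset.sum_Ico_sub (f := fun i => e i b.2 - e i a.2) h₁
    _ = rectVec a b := by simp only [rectVec, e]; abel

theorem rectVec_mem_latticeOf {a b : Pt} (h : IsInnerInterval P a b) :
    rectVec a b ∈ latticeOf P := by
  obtain ⟨h₁, h₂, hcells⟩ := h
  rw [← sum_cellVec_eq_rectVec h₁.le h₂.le]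
  refine AddSubgroup.sum_mem _ fun i hi => AddSubgroup.sum_mem _ fun j hj => ?_
  rw [Finset.mem_Ico] at hi hj
  exact AddSubgroup.subset_closure ⟨(i, j), hcells (i, j) hi.1 hi.2 hj.1 hj.2, rfl⟩

theorem innerMinor_eq_monomial_sub (a b : Pt) :
    innerMinor K a b =
      monomial (Finsupp.single a 1 + Finsupp.single b 1) 1 -
        monomial (Finsupp.single (a.1, b.2) 1 + Finsupp.single (b.1, a.2) 1) 1 := by
  rw [innerMinor, X, X, X, X, monomial_mul, monomial_mul, mul_one]

theorem natCastVec_sub_eq_rectVec (a b : Pt) :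
    natCastVec (Finsupp.single a 1 + Finsupp.single b 1) -
        natCastVec (Finsupp.single (a.1, b.2) 1 + Finsupp.single (b.1, a.2) 1) =
      rectVec a b := by
  simp only [map_add, natCastVec, Finsupp.mapRange.addMonoidHom_apply, Finsupp.mapRange_single,
    Nat.coe_castAddMonoidHom, Nat.cast_one, rectVec]
  abel

theorem polyIdeal_le_latticeIdeal : polyIdeal K P ≤ latticeIdeal K P := by
  refine Ideal.span_le.2 ?_
  rintro _ ⟨a, b, hab, rfl⟩
  rw [innerMinor_eq_monomial_sub]
  exact monomial_sub_mem_binomialIdeal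
    (by rw [natCastVec_sub_eq_rectVec]; exact rectVec_mem_latticeOf hab)

theorem latticeIdeal_le_monomialSaturation :
    latticeIdeal K P ≤ monomialSaturation (polyIdeal K P) := by
  have hsat := isMonomialSaturated_monomialSaturation (polyIdeal K P)
  refine binomialIdeal_closure_le hsat ?_
  rintro _ ⟨c, hc, rfl⟩
  have hcell : IsInnerInterval P c (c.1 + 1, c.2 + 1) :=
    ⟨c.1.lt_succ_self, c.2.lt_succ_self, fun e h₁ h₂ h₃ h₄ =>
      (Prod.ext (by omega) (by omega) : e = c) ▸ hc⟩
  have hminor : innerMinor K c (c.1 + 1, c.2 + 1) ∈ polyIdeal K P :=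
    Ideal.subset_span ⟨_, _, hcell, rfl⟩
  rw [innerMinor_eq_monomial_sub] at hminor
  have := latticeBinomial_mem_of_monomial_sub_mem hsat (le_monomialSaturation _ hminor)
  rwa [natCastVec_sub_eq_rectVec, ← cellVec_eq_rectVec] at this

theorem latticeOf_le_supported :
    latticeOf P ≤ (Finsupp.supported ℤ ℤ (vertexSet P : Set Pt)).toAddSubgroup := by
  refine AddSubgroup.closure_le _ |>.2 ?_
  rintro _ ⟨c, hc, rfl⟩
  have hverts : (cellVerts c : Set Pt) ⊆ vertexSet P :=
    Finset.coe_subset.2 (Finset.subset_biUnion_of_mem cellVerts hc)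
  have hsingle : ∀ v ∈ cellVerts c, Finsupp.single v (1 : ℤ) ∈
      Finsupp.supported ℤ ℤ (vertexSet P : Set Pt) :=
    fun v hv => Finsupp.single_mem_supported ℤ 1 (hverts hv)
  simp only [cellVerts, Finset.mem_insert, Finset.mem_singleton, forall_eq_or_imp,
    forall_eq] at hsingle
  obtain ⟨h₁, h₂, h₃, h₄⟩ := hsingle
  exact Submodule.sub_mem _ (Submodule.sub_mem _ (Submodule.add_mem _ h₁ h₄) h₂) h₃

theorem latticeIdeal_fg : (latticeIdeal K P).FG :=
  binomialIdeal_fg (vertexSet P) fun _ hu =>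
    Finset.coe_subset.1 ((Finsupp.mem_supported ℤ _).1 (latticeOf_le_supported hu))

end Polyomino

theorem lattice_ideal_is_colon_general (K : Type*) [Field K] (P : Finset Pt) :
    ∃ u : Pt →₀ ℕ,
      latticeIdeal K P =
        Submodule.colon (polyIdeal K P)
          (Ideal.span {(monomial u (1 : K) : MvPolynomial Pt K)}) := by
  obtain ⟨u, hu⟩ := exists_le_colon_monomial_of_fg latticeIdeal_fg
    (latticeIdeal_le_monomialSaturation (K := K) (P := P))
  refine ⟨u, le_antisymm hu fun f hf => ?_⟩
  rw [Ideal.mem_colon_span_singleton, mul_comm] at hf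
  rw [latticeIdeal_eq_binomialIdeal]
  exact isMonomialSaturated_binomialIdeal _ u f (polyIdeal_le_latticeIdeal hf)

/-- Lemma 1.1: there is a monomial `u` with `I_Λ = (I_P : u)`. -/
theorem lattice_ideal_is_colon (K : Type*) [Field K] (m n : ℕ) (P : Finset Pt)
    (hbox : ∀ c ∈ P, 1 ≤ c.1 ∧ c.1 + 1 ≤ m ∧ 1 ≤ c.2 ∧ c.2 + 1 ≤ n) :
    ∃ u : Pt →₀ ℕ,
      latticeIdeal K P =
        Submodule.colon (polyIdeal K P)
          (Ideal.span {(monomial u (1 : K) : MvPolynomial Pt K)}) :=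
  lattice_ideal_is_colon_general K P

end PolyominoPaper
end

section
/- Let P be a polyomino. The set M of inner 2-minors of P forms a reduced Gröbner basis of I_P with respect to <^i_grevlex for every i ∈ O = {1,3,5,7} if and only if for any two inner intervals [a,b] and [b,e] of P, at least one of the intervals [a,f] and [a,g] is an inner interval of P, where f and g are the anti-diagonal corners of [b,e]. -/
namespace PolyominoPaper

open MvPolynomial

/-!
For an odd order `<ⁱ` the smallest of the four corners of a proper interval is an anti-diagonal
one, so the leading monomial of an inner 2-minor is its diagonal `x_a x_b`, and `M` is a Gröbner
basis exactly when every leading monomial of `I_P` is divisible by an inner diagonal. (Reducedness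
is automatic: distinct inner minors have distinct diagonals, and no diagonal is an anti-diagonal.)

Read every inner 2-minor as a rewriting rule `x_a x_b ↦ x_c x_d` on monomials. A rewriting step
lowers `<ⁱ_grevlex`, and it lowers `∑ m(v) v₁ v₂`, so rewriting terminates. Two rules whose
diagonals are disjoint commute; rules sharing a diagonal corner can always be rejoined, except
that for intervals `[a,b]`, `[b,e]` meeting in the corner `b` this needs `[a,f]` or `[a,g]` to be
inner. Under the condition, Newman's lemma makes joinability a congruence on monomials, so the
coefficient sums of an element of `I_P` over its classes vanish. An irreducible monomial is the
grevlex-smallest member of its class, hence cannot be the leading monomial of an element of `I_P`.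

Conversely, if neither `[a,f]` nor `[a,g]` is inner, then
`x_e (x_a x_b - x_c x_d) - x_a (x_b x_e - x_f x_g) = x_a x_f x_g - x_c x_d x_e` lies in `I_P`,
and its `<¹`-leading monomial `x_a x_f x_g` is divisible by no inner diagonal.
-/

open Finsupp Relation

theorem join_reflTransGen_of_locallyConfluent {α : Type*} {r : α → α → Prop}
    (hwf : WellFounded (flip r)) (hloc : ∀ a b c, r a b → r a c → Join (ReflTransGen r) b c)
    {a b c : α} (hab : ReflTransGen r a b) (hac : ReflTransGen r a c) :
    Join (ReflTransGen r) b c := by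
  induction a using hwf.induction generalizing b c with
  | _ a ih =>
    rcases hab.cases_head with rfl | ⟨b', hab', hb'b⟩
    · exact ⟨c, hac, .refl⟩
    rcases hac.cases_head with rfl | ⟨c', hac', hc'c⟩
    · exact ⟨b, .refl, .head hab' hb'b⟩
    obtain ⟨d, hb'd, hc'd⟩ := hloc _ _ _ hab' hac'
    obtain ⟨e, hbe, hde⟩ := ih b' hab' hb'b hb'd
    obtain ⟨f, hef, hcf⟩ := ih c' hac' (hc'd.trans hde) hc'c
    exact ⟨f, hbe.trans hef, hcf⟩

section Monomials

variable {σ R : Type*} [CommRing R]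

open scoped Classical in
/-- The class sums are the coefficients of the image of `f` under the ring hom
`R[σ →₀ ℕ] → R[(σ →₀ ℕ) ⧸ c]`, which kills the binomials. -/
theorem sum_coeff_eq_zero_of_mem_span_binomials (c : AddCon (σ →₀ ℕ)) {f : MvPolynomial σ R}
    (hf : f ∈ Ideal.span {g | ∃ u v, c u v ∧ g = monomial u 1 - monomial v 1})
    (m : σ →₀ ℕ) : ∑ n ∈ f.support with c n m, coeff n f = 0 := by
  let Φ := AddMonoidAlgebra.mapDomainRingHom R (c.mk' : (σ →₀ ℕ) →+ c.Quotient)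
  have hker : Φ f = 0 := by
    refine (Ideal.span_le (I := RingHom.ker Φ)).mpr ?_ hf
    rintro _ ⟨u, v, huv, rfl⟩
    rw [SetLike.mem_coe, RingHom.mem_ker, map_sub, sub_eq_zero]
    simp [Φ, MvPolynomial.monomial, c.eq.mpr huv]
  have := congrArg (fun p => p.coeff (c.mk' m)) hker
  simp only [AddMonoidAlgebra.mapDomainRingHom_apply, AddCon.coe_mk',
    AddMonoidAlgebra.coeff_mapDomain, mapDomain_apply_eq_sum, c.eq, AddMonoidAlgebra.coeff_zero,
    Finsupp.coe_zero, Pi.zero_apply, Φ] at this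
  exact this

theorem support_monomial_sub_monomial [DecidableEq σ] [Nontrivial R] {m n : σ →₀ ℕ} (hne : m ≠ n) :
    (monomial m (1 : R) - monomial n 1).support = {m, n} := by
  ext k
  rw [MvPolynomial.mem_support_iff, coeff_sub, coeff_monomial, coeff_monomial, Finset.mem_insert,
    Finset.mem_singleton]
  by_cases hm : m = k <;> by_cases hn : n = k <;> simp_all [eq_comm]

theorem exists_eq_add_single_of_add_single_eq {u₁ u₂ : σ →₀ ℕ} {x y : σ} (hxy : x ≠ y)
    (h : u₁ + single x 1 = u₂ + single y 1) : ∃ t, u₁ = t + single y 1 ∧ u₂ = t + single x 1 := by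
  have hy : single y 1 ≤ u₁ := by
    rw [single_le_iff]
    have := DFunLike.congr_fun h y
    simp only [Finsupp.coe_add, Pi.add_apply, single_eq_of_ne' hxy, add_zero,
      single_eq_same] at this
    omega
  obtain ⟨t, rfl⟩ := exists_add_of_le hy
  refine ⟨t, add_comm _ _, add_right_cancel (b := single y 1) ?_⟩
  rw [← h]
  abel

theorem eq_or_eq_or_eq_of_single_le {x y z w : σ}
    (h : single w 1 ≤ single x 1 + single y 1 + single z 1) : w = x ∨ w = y ∨ w = z := by
  by_contra! hw
  have := single_le_iff.mp h
  simp [Ne.symm hw.1, Ne.symm hw.2.1, Ne.symm hw.2.2] at this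

end Monomials

section LeadingMonomials

variable {K : Type*} [Field K] {mlt : (Pt →₀ ℕ) → (Pt →₀ ℕ) → Prop}

theorem IsLeadMon.unique [Std.Asymm mlt] {f : MvPolynomial Pt K} {m m' : Pt →₀ ℕ}
    (h : IsLeadMon mlt f m) (h' : IsLeadMon mlt f m') : m = m' := by
  by_contra hne
  exact asymm (h'.2 m h.1 hne) (h.2 m' h'.1 (Ne.symm hne))

theorem isLeadMon_monomial_sub_monomial {m n : Pt →₀ ℕ} (hne : m ≠ n) (hlt : mlt n m) :
    IsLeadMon mlt (monomial m (1 : K) - monomial n 1) m := by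
  rw [IsLeadMon, support_monomial_sub_monomial hne]
  refine ⟨by simp, fun m' hm' hm'm => ?_⟩
  rcases Finset.mem_insert.mp hm' with rfl | hm'
  · exact absurd rfl hm'm
  · rwa [Finset.mem_singleton.mp hm']

theorem lmIdeal_le_lmIdeal_iff {F G : Set (MvPolynomial Pt K)} :
    lmIdeal mlt F ≤ lmIdeal mlt G ↔
      ∀ f ∈ F, ∀ m, IsLeadMon mlt f m → ∃ g ∈ G, ∃ m', IsLeadMon mlt g m' ∧ m' ≤ m := by
  have hG : lmIdeal mlt G =
      Ideal.span ((fun m => monomial m (1 : K)) '' {m | ∃ g ∈ G, IsLeadMon mlt g m}) := by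
    rw [lmIdeal]
    congr 1
    ext p
    aesop
  rw [hG, lmIdeal, Ideal.span_le]
  constructor
  · intro h f hf m hm
    obtain ⟨m', ⟨g, hg, hm'⟩, hle⟩ :=
      mem_ideal_span_monomial_image.mp (h ⟨f, hf, m, hm, rfl⟩) m (by simp)
    exact ⟨g, hg, m', hm', hle⟩
  · rintro h _ ⟨f, hf, m, hm, rfl⟩
    refine mem_ideal_span_monomial_image.mpr fun n hn => ?_
    rw [Finset.mem_singleton.mp (support_monomial_subset hn)]
    obtain ⟨g, hg, m', hm', hle⟩ := h f hf m hm
    exact ⟨m', ⟨g, hg, hm'⟩, hle⟩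

end LeadingMonomials

section Grevlex

variable {vlt : Pt → Pt → Prop} {m m' m'' : Pt →₀ ℕ}

theorem mdeg_eq_degree (m : Pt →₀ ℕ) : mdeg m = m.degree := rfl

theorem eq_of_le_of_degree_le (hle : m ≤ m') (hdeg : m'.degree ≤ m.degree) : m = m' := by
  obtain ⟨t, rfl⟩ := exists_add_of_le hle
  rw [map_add] at hdeg
  rw [(degree_eq_zero_iff t).mp (by omega), add_zero]

theorem grevlexLt_irrefl (m : Pt →₀ ℕ) : ¬ GrevlexLt vlt m m := by
  rintro (h | ⟨-, v, hv, -⟩) <;> exact lt_irrefl _ ‹_›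

theorem grevlexLt_trans [IsTrans Pt vlt] [Std.Trichotomous vlt] (h₁ : GrevlexLt vlt m m')
    (h₂ : GrevlexLt vlt m' m'') : GrevlexLt vlt m m'' := by
  rcases h₁ with h₁ | ⟨hd₁, v₁, hv₁, hb₁⟩ <;> rcases h₂ with h₂ | ⟨hd₂, v₂, hv₂, hb₂⟩
  · exact Or.inl (h₁.trans h₂)
  · exact Or.inl (hd₂ ▸ h₁)
  · exact Or.inl (hd₁ ▸ h₂)
  refine Or.inr ⟨hd₁.trans hd₂, ?_⟩
  -- the witness is whichever of `v₁`, `v₂` comes first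
  rcases trichotomous_of vlt v₁ v₂ with hlt | rfl | hlt
  · exact ⟨v₁, hb₂ v₁ hlt ▸ hv₁, fun w hw => (hb₁ w hw).trans (hb₂ w (_root_.trans hw hlt))⟩
  · exact ⟨v₁, hv₂.trans hv₁, fun w hw => (hb₁ w hw).trans (hb₂ w hw)⟩
  · exact ⟨v₂, hb₁ v₂ hlt ▸ hv₂, fun w hw => (hb₁ w (_root_.trans hw hlt)).trans (hb₂ w hw)⟩

instance [IsTrans Pt vlt] [Std.Trichotomous vlt] : IsStrictOrder (Pt →₀ ℕ) (GrevlexLt vlt) where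
  irrefl := grevlexLt_irrefl
  trans _ _ _ := grevlexLt_trans

theorem GrevlexLt.add_left (u : Pt →₀ ℕ) (h : GrevlexLt vlt m m') :
    GrevlexLt vlt (u + m) (u + m') := by
  simp only [GrevlexLt, mdeg_eq_degree, map_add, Finsupp.coe_add, Pi.add_apply] at h ⊢
  rcases h with h | ⟨hd, v, hv, hb⟩
  · exact Or.inl (by omega)
  · exact Or.inr ⟨by omega, v, by omega, fun w hw => by rw [hb w hw]⟩

end Grevlex

section VertexOrders

variable {i : ℕ}

theorem vord_isStrictTotalOrder (hi : i ∈ Finset.Icc 1 8) : IsStrictTotalOrder Pt (vord i) := by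
  obtain ⟨hi₁, hi₈⟩ := Finset.mem_Icc.mp hi
  interval_cases i <;>
    exact
      { trichotomous := fun a b => by simp only [vord, Prod.ext_iff]; omega
        irrefl := fun a => by simp only [vord]; omega
        trans := fun a b c => by simp only [vord]; omega }

theorem exists_antidiag_corner_vord_minimal (hi : i ∈ ({1, 3, 5, 7} : Finset ℕ)) {a b : Pt}
    (h₁ : a.1 < b.1) (h₂ : a.2 < b.2) :
    ∃ c, (c = (a.1, b.2) ∨ c = (b.1, a.2)) ∧
      ∀ w, vord i w c → w ≠ a ∧ w ≠ b ∧ w ≠ (a.1, b.2) ∧ w ≠ (b.1, a.2) := by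
  simp only [Finset.mem_insert, Finset.mem_singleton] at hi
  rcases hi with rfl | rfl | rfl | rfl
  · exact ⟨_, Or.inl rfl, fun w hw => by simp only [vord, ne_eq, Prod.ext_iff] at hw ⊢; omega⟩
  · exact ⟨_, Or.inr rfl, fun w hw => by simp only [vord, ne_eq, Prod.ext_iff] at hw ⊢; omega⟩
  · exact ⟨_, Or.inr rfl, fun w hw => by simp only [vord, ne_eq, Prod.ext_iff] at hw ⊢; omega⟩
  · exact ⟨_, Or.inl rfl, fun w hw => by simp only [vord, ne_eq, Prod.ext_iff] at hw ⊢; omega⟩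

end VertexOrders

section InnerMinors

variable {K : Type*} [Field K] {i : ℕ} {a b c d : Pt}

noncomputable def diagMon (a b : Pt) : Pt →₀ ℕ := single a 1 + single b 1

noncomputable def antidiagMon (a b : Pt) : Pt →₀ ℕ := diagMon (a.1, b.2) (b.1, a.2)

theorem innerMinor_eq (a b : Pt) :
    innerMinor K a b = monomial (diagMon a b) 1 - monomial (antidiagMon a b) 1 := by
  simp only [innerMinor, antidiagMon, diagMon, X, monomial_mul, one_mul]

@[simp]
theorem degree_diagMon (a b : Pt) : (diagMon a b).degree = 2 := by
  simp [diagMon]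

theorem diagMon_eq_single_add_single_iff {a b x y : Pt} :
    diagMon a b = single x 1 + single y 1 ↔ a = x ∧ b = y ∨ a = y ∧ b = x := by
  rw [diagMon, single_add_single_eq_single_add_single one_ne_zero one_ne_zero]
  simp

theorem diagMon_inj (hab : a.1 < b.1) (hcd : c.1 < d.1) (h : diagMon a b = diagMon c d) :
    a = c ∧ b = d := by
  rcases diagMon_eq_single_add_single_iff.mp h with h | ⟨rfl, rfl⟩
  · exact h
  · omega

theorem diagMon_ne_antidiagMon (hab₁ : a.1 < b.1) (hab₂ : a.2 < b.2) (hcd₁ : c.1 < d.1)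
    (hcd₂ : c.2 < d.2) : diagMon a b ≠ antidiagMon c d := fun h => by
  obtain ⟨rfl, rfl⟩ := diagMon_inj (c := (c.1, d.2)) (d := (d.1, c.2)) hab₁ hcd₁ h
  omega

theorem antidiagMon_grevlexLt_diagMon (hi : i ∈ ({1, 3, 5, 7} : Finset ℕ)) (h₁ : a.1 < b.1)
    (h₂ : a.2 < b.2) : GrevlexLt (vord i) (antidiagMon a b) (diagMon a b) := by
  obtain ⟨c, hc, hcorner⟩ := exists_antidiag_corner_vord_minimal hi h₁ h₂
  refine Or.inr ⟨by simp [mdeg_eq_degree, antidiagMon], c, ?_, fun w hw => ?_⟩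
  · rcases hc with rfl | rfl <;>
      simp only [diagMon, antidiagMon, Finsupp.coe_add, Pi.add_apply, single_apply,
        Prod.ext_iff] <;>
      split_ifs <;> omega
  · obtain ⟨hwa, hwb, hwc, hwd⟩ := hcorner w hw
    simp [diagMon, antidiagMon, Ne.symm hwa, Ne.symm hwb, Ne.symm hwc, Ne.symm hwd]

theorem isLeadMon_innerMinor (hi : i ∈ ({1, 3, 5, 7} : Finset ℕ)) (h₁ : a.1 < b.1)
    (h₂ : a.2 < b.2) : IsLeadMon (GrevlexLt (vord i)) (innerMinor K a b) (diagMon a b) := by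
  rw [innerMinor_eq]
  exact isLeadMon_monomial_sub_monomial (diagMon_ne_antidiagMon h₁ h₂ h₁ h₂)
    (antidiagMon_grevlexLt_diagMon hi h₁ h₂)

end InnerMinors

section Reduction

variable {P : Finset Pt} {i : ℕ} {m m' n n' : Pt →₀ ℕ}

def Reduces (P : Finset Pt) (m m' : Pt →₀ ℕ) : Prop :=
  ∃ u a b, IsInnerInterval P a b ∧ m = u + diagMon a b ∧ m' = u + antidiagMon a b

theorem Reduces.add_left (w : Pt →₀ ℕ) (h : Reduces P m m') : Reduces P (w + m) (w + m') := by
  obtain ⟨u, a, b, hab, rfl, rfl⟩ := h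
  exact ⟨w + u, a, b, hab, (add_assoc _ _ _).symm, (add_assoc _ _ _).symm⟩

theorem reflTransGen_reduces_add (h : ReflTransGen (Reduces P) m m')
    (h' : ReflTransGen (Reduces P) n n') : ReflTransGen (Reduces P) (m + n) (m' + n') := by
  have hm : ReflTransGen (Reduces P) (n + m) (n + m') :=
    h.lift _ fun _ _ hr => hr.add_left n
  have hn : ReflTransGen (Reduces P) (m' + n) (m' + n') :=
    h'.lift _ fun _ _ hr => hr.add_left m'
  rw [add_comm n, add_comm n] at hm
  exact hm.trans hn

theorem join_reduces_add (h : Join (ReflTransGen (Reduces P)) m m')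
    (h' : Join (ReflTransGen (Reduces P)) n n') :
    Join (ReflTransGen (Reduces P)) (m + n) (m' + n') := by
  obtain ⟨z, hmz, hm'z⟩ := h
  obtain ⟨z', hnz, hn'z⟩ := h'
  exact ⟨z + z', reflTransGen_reduces_add hmz hnz, reflTransGen_reduces_add hm'z hn'z⟩

/-- Replacing `x_a x_b` by `x_c x_d` lowers `∑ m(v) v₁ v₂` by `(b₁ - a₁)(b₂ - a₂) > 0`. -/
theorem Reduces.weight_lt (h : Reduces P m m') :
    weight (fun v : Pt => v.1 * v.2) m' < weight (fun v : Pt => v.1 * v.2) m := by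
  obtain ⟨u, a, b, ⟨h₁, h₂, -⟩, rfl, rfl⟩ := h
  simp only [antidiagMon, diagMon, map_add, weight_single, smul_eq_mul, one_mul]
  nlinarith

theorem wellFounded_flip_reduces : WellFounded (flip (Reduces P)) :=
  Subrelation.wf (fun h => Reduces.weight_lt h)
    (measure fun m : Pt →₀ ℕ => weight (fun v : Pt => v.1 * v.2) m).wf

theorem Reduces.grevlexLt (hi : i ∈ ({1, 3, 5, 7} : Finset ℕ)) (h : Reduces P m m') :
    GrevlexLt (vord i) m' m := by
  obtain ⟨u, a, b, ⟨h₁, h₂, -⟩, rfl, rfl⟩ := h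
  exact (antidiagMon_grevlexLt_diagMon hi h₁ h₂).add_left u

theorem grevlexLt_of_transGen_reduces [IsTrans Pt (vord i)] [Std.Trichotomous (vord i)]
    (hi : i ∈ ({1, 3, 5, 7} : Finset ℕ)) (h : TransGen (Reduces P) m m') :
    GrevlexLt (vord i) m' m := by
  induction h with
  | single h => exact h.grevlexLt hi
  | tail _ h ih => exact grevlexLt_trans (h.grevlexLt hi) ih

end Reduction

theorem IsInnerInterval.mono {P : Finset Pt} {a b c d : Pt} (h : IsInnerInterval P a b)
    (hsub : a.1 ≤ c.1 ∧ a.2 ≤ c.2 ∧ d.1 ≤ b.1 ∧ d.2 ≤ b.2) (hcd : c.1 < d.1 ∧ c.2 < d.2) :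
    IsInnerInterval P c d :=
  ⟨hcd.1, hcd.2, fun e h₁ h₂ h₃ h₄ => h.2.2 e (by omega) (by omega) (by omega) (by omega)⟩

def CornerCondition (P : Finset Pt) : Prop :=
  ∀ a b e : Pt, IsInnerInterval P a b → IsInnerInterval P b e →
    IsInnerInterval P a (b.1, e.2) ∨ IsInnerInterval P a (e.1, b.2)

section CriticalPairs

variable {P : Finset Pt} {m : Pt →₀ ℕ}

theorem reduces_of_eq {m' : Pt →₀ ℕ} (a b : Pt) (h : IsInnerInterval P a b) (u : Pt →₀ ℕ)
    (hm : m = u + single a 1 + single b 1)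
    (hm' : m' = u + single (a.1, b.2) 1 + single (b.1, a.2) 1) : Reduces P m m' :=
  ⟨u, a, b, h, by rw [hm, add_assoc, diagMon], by rw [hm', add_assoc, antidiagMon, diagMon]⟩

theorem join_of_same_lower_corner_of_le {a b e : Pt} (hab : IsInnerInterval P a b)
    (hae : IsInnerInterval P a e) (hbe : b.1 < e.1 ∨ b.1 = e.1 ∧ b.2 ≤ e.2) :
    Join (ReflTransGen (Reduces P)) (single e 1 + antidiagMon a b)
      (single b 1 + antidiagMon a e) := by
  obtain ⟨a₁, a₂⟩ := a; obtain ⟨b₁, b₂⟩ := b; obtain ⟨e₁, e₂⟩ := e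
  have hab₁ := hab.1; have hab₂ := hab.2.1; have hae₁ := hae.1; have hae₂ := hae.2.1
  dsimp only at hbe hab₁ hab₂ hae₁ hae₂
  rcases hbe with hbe₁ | ⟨rfl, hbe₂⟩
  · rcases lt_trichotomy b₂ e₂ with hbe₂ | rfl | hbe₂
    · refine ⟨_, .head (reduces_of_eq (a₁, b₂) (e₁, e₂) (hae.mono (by omega) (by omega))
          (single (b₁, a₂) 1) ?_ rfl) (.single (reduces_of_eq (b₁, a₂) (e₁, b₂)
          (hae.mono (by omega) (by omega)) (single (a₁, e₂) 1) ?_ ?_)), .refl⟩ <;>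
        simp only [antidiagMon, diagMon] <;> abel
    · refine ⟨_, .single (reduces_of_eq (b₁, a₂) (e₁, b₂) (hae.mono (by omega) (by omega))
          (single (a₁, b₂) 1) ?_ ?_), .refl⟩ <;>
        simp only [antidiagMon, diagMon] <;> abel
    · refine ⟨_, .single (reduces_of_eq (b₁, a₂) (e₁, e₂) (hae.mono (by omega) (by omega))
          (single (a₁, b₂) 1) ?_ rfl), .single (reduces_of_eq (a₁, e₂) (b₁, b₂)
          (hab.mono (by omega) (by omega)) (single (e₁, a₂) 1) ?_ ?_)⟩ <;>
        simp only [antidiagMon, diagMon] <;> abel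
  · rcases hbe₂.lt_or_eq with hbe₂ | rfl
    · refine ⟨_, .single (reduces_of_eq (a₁, b₂) (b₁, e₂) (hae.mono (by omega) (by omega))
          (single (b₁, a₂) 1) ?_ ?_), .refl⟩ <;>
        simp only [antidiagMon, diagMon] <;> abel
    · exact ⟨_, .refl, .refl⟩

theorem join_of_same_lower_corner {a b e : Pt} (hab : IsInnerInterval P a b)
    (hae : IsInnerInterval P a e) :
    Join (ReflTransGen (Reduces P)) (single e 1 + antidiagMon a b)
      (single b 1 + antidiagMon a e) := by
  by_cases hbe : b.1 < e.1 ∨ b.1 = e.1 ∧ b.2 ≤ e.2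
  · exact join_of_same_lower_corner_of_le hab hae hbe
  · exact symm (join_of_same_lower_corner_of_le hae hab (by omega))

theorem join_of_same_upper_corner_of_le {a p b : Pt} (hab : IsInnerInterval P a b)
    (hpb : IsInnerInterval P p b) (hap : a.1 < p.1 ∨ a.1 = p.1 ∧ a.2 ≤ p.2) :
    Join (ReflTransGen (Reduces P)) (single p 1 + antidiagMon a b)
      (single a 1 + antidiagMon p b) := by
  obtain ⟨a₁, a₂⟩ := a; obtain ⟨p₁, p₂⟩ := p; obtain ⟨b₁, b₂⟩ := b
  have hab₁ := hab.1; have hab₂ := hab.2.1; have hpb₁ := hpb.1; have hpb₂ := hpb.2.1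
  dsimp only at hap hab₁ hab₂ hpb₁ hpb₂
  rcases hap with hap₁ | ⟨rfl, hap₂⟩
  · rcases lt_trichotomy a₂ p₂ with hap₂ | rfl | hap₂
    · refine ⟨_, .refl, .head (reduces_of_eq (a₁, a₂) (p₁, b₂) (hab.mono (by omega) (by omega))
          (single (b₁, p₂) 1) ?_ rfl) (.single (reduces_of_eq (p₁, a₂) (b₁, p₂)
          (hab.mono (by omega) (by omega)) (single (a₁, b₂) 1) ?_ ?_))⟩ <;>
        simp only [antidiagMon, diagMon] <;> abel
    · refine ⟨_, .refl, .single (reduces_of_eq (a₁, a₂) (p₁, b₂)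
          (hab.mono (by omega) (by omega)) (single (b₁, a₂) 1) ?_ ?_)⟩ <;>
        simp only [antidiagMon, diagMon] <;> abel
    · refine ⟨_, .single (reduces_of_eq (p₁, p₂) (b₁, a₂) (hpb.mono (by omega) (by omega))
          (single (a₁, b₂) 1) ?_ rfl), .single (reduces_of_eq (a₁, a₂) (p₁, b₂)
          (hab.mono (by omega) (by omega)) (single (b₁, p₂) 1) ?_ ?_)⟩ <;>
        simp only [antidiagMon, diagMon] <;> abel
  · rcases hap₂.lt_or_eq with hap₂ | rfl
    · refine ⟨_, .refl, .single (reduces_of_eq (a₁, a₂) (b₁, p₂)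
          (hab.mono (by omega) (by omega)) (single (a₁, b₂) 1) ?_ ?_)⟩ <;>
        simp only [antidiagMon, diagMon] <;> abel
    · exact ⟨_, .refl, .refl⟩

theorem join_of_same_upper_corner {a p b : Pt} (hab : IsInnerInterval P a b)
    (hpb : IsInnerInterval P p b) :
    Join (ReflTransGen (Reduces P)) (single p 1 + antidiagMon a b)
      (single a 1 + antidiagMon p b) := by
  by_cases hap : a.1 < p.1 ∨ a.1 = p.1 ∧ a.2 ≤ p.2
  · exact join_of_same_upper_corner_of_le hab hpb hap
  · exact symm (join_of_same_upper_corner_of_le hpb hab (by omega))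

theorem join_of_upper_eq_lower_corner (hP : CornerCondition P) {a b e : Pt}
    (hab : IsInnerInterval P a b) (hbe : IsInnerInterval P b e) :
    Join (ReflTransGen (Reduces P)) (single e 1 + antidiagMon a b)
      (single a 1 + antidiagMon b e) := by
  obtain ⟨a₁, a₂⟩ := a; obtain ⟨b₁, b₂⟩ := b; obtain ⟨e₁, e₂⟩ := e
  have hab₁ := hab.1; have hab₂ := hab.2.1; have hbe₁ := hbe.1; have hbe₂ := hbe.2.1
  dsimp only at hab₁ hab₂ hbe₁ hbe₂
  rcases hP _ _ _ hab hbe with haf | hag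
  · have hce : IsInnerInterval P (a₁, b₂) (e₁, e₂) := ⟨by omega, by omega, fun c h₁ h₂ h₃ h₄ =>
      if hc : c.1 < b₁ then haf.2.2 c h₁ hc (by omega) h₄
      else hbe.2.2 c (by omega) h₂ h₃ h₄⟩
    refine ⟨_, .single (reduces_of_eq (a₁, b₂) (e₁, e₂) hce (single (b₁, a₂) 1) ?_ rfl),
      .single (reduces_of_eq (a₁, a₂) (b₁, e₂) haf (single (e₁, b₂) 1) ?_ ?_)⟩ <;>
      simp only [antidiagMon, diagMon] <;> abel
  · have hde : IsInnerInterval P (b₁, a₂) (e₁, e₂) := ⟨by omega, by omega, fun c h₁ h₂ h₃ h₄ =>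
      if hc : c.2 < b₂ then hag.2.2 c (by omega) h₂ h₃ hc
      else hbe.2.2 c h₁ h₂ (by omega) h₄⟩
    refine ⟨_, .single (reduces_of_eq (b₁, a₂) (e₁, e₂) hde (single (a₁, b₂) 1) ?_ rfl),
      .single (reduces_of_eq (a₁, a₂) (e₁, b₂) hag (single (b₁, e₂) 1) ?_ ?_)⟩ <;>
      simp only [antidiagMon, diagMon] <;> abel

end CriticalPairs

section Confluence

variable {P : Finset Pt} {m m₁ m₂ : Pt →₀ ℕ}

theorem eq_or_eq_of_diagMon_apply_pos {a b v : Pt} (h : 0 < diagMon a b v) : v = a ∨ v = b := by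
  by_contra! hv
  simp [diagMon, Ne.symm hv.1, Ne.symm hv.2] at h

theorem join_of_shared_corner (hP : CornerCondition P) {a b p q v x y : Pt}
    (hab : IsInnerInterval P a b) (hpq : IsInnerInterval P p q)
    (hx : diagMon a b = single v 1 + single x 1) (hy : diagMon p q = single v 1 + single y 1) :
    Join (ReflTransGen (Reduces P)) (single y 1 + antidiagMon a b)
      (single x 1 + antidiagMon p q) := by
  rcases diagMon_eq_single_add_single_iff.mp hx with ⟨rfl, rfl⟩ | ⟨rfl, rfl⟩ <;>
    rcases diagMon_eq_single_add_single_iff.mp hy with ⟨rfl, rfl⟩ | ⟨rfl, rfl⟩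
  · exact join_of_same_lower_corner hab hpq
  · exact symm (join_of_upper_eq_lower_corner hP hpq hab)
  · exact join_of_upper_eq_lower_corner hP hab hpq
  · exact join_of_same_upper_corner hab hpq

theorem reduces_locallyConfluent (hP : CornerCondition P) (h₁ : Reduces P m m₁)
    (h₂ : Reduces P m m₂) : Join (ReflTransGen (Reduces P)) m₁ m₂ := by
  obtain ⟨u₁, a, b, hab, rfl, rfl⟩ := h₁
  obtain ⟨u₂, p, q, hpq, hm, rfl⟩ := h₂
  by_cases hdisj : diagMon a b ≤ u₂
  · obtain ⟨s, rfl⟩ := exists_add_of_le hdisj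
    obtain rfl : u₁ = s + diagMon p q := add_right_cancel (b := diagMon a b) (by rw [hm]; abel)
    exact ⟨s + antidiagMon a b + antidiagMon p q,
      .single ⟨s + antidiagMon a b, p, q, hpq, by abel, by abel⟩,
      .single ⟨s + antidiagMon p q, a, b, hab, by abel, by abel⟩⟩
  -- otherwise the two diagonals share a corner `v`
  obtain ⟨v, hv⟩ : ∃ v, u₂ v < diagMon a b v := by
    simpa [Finsupp.le_def] using hdisj
  have hvpq : 0 < diagMon p q v := by
    have := DFunLike.congr_fun hm v
    simp only [Finsupp.coe_add, Pi.add_apply] at this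
    omega
  obtain ⟨x, hx⟩ : ∃ x, diagMon a b = single v 1 + single x 1 := by
    rcases eq_or_eq_of_diagMon_apply_pos (hv.trans_le' (Nat.zero_le _)) with rfl | rfl
    exacts [⟨b, rfl⟩, ⟨a, add_comm _ _⟩]
  obtain ⟨y, hy⟩ : ∃ y, diagMon p q = single v 1 + single y 1 := by
    rcases eq_or_eq_of_diagMon_apply_pos hvpq with rfl | rfl
    exacts [⟨q, rfl⟩, ⟨p, add_comm _ _⟩]
  have hxy : u₁ + single x 1 = u₂ + single y 1 := add_right_cancel (b := single v 1) <| by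
    rw [add_assoc, add_comm (single x 1), ← hx, hm, hy]
    abel
  rcases eq_or_ne x y with rfl | hne
  · obtain rfl := add_right_cancel hxy
    obtain ⟨rfl, rfl⟩ := diagMon_inj hab.1 hpq.1 (hx.trans hy.symm)
    exact ⟨_, .refl, .refl⟩
  obtain ⟨t, rfl, rfl⟩ := exists_eq_add_single_of_add_single_eq hne hxy
  simpa only [add_assoc] using
    join_reduces_add ⟨t, .refl, .refl⟩ (join_of_shared_corner hP hab hpq hx hy)

theorem reduces_confluent (hP : CornerCondition P) (h₁ : ReflTransGen (Reduces P) m m₁)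
    (h₂ : ReflTransGen (Reduces P) m m₂) : Join (ReflTransGen (Reduces P)) m₁ m₂ :=
  join_reflTransGen_of_locallyConfluent wellFounded_flip_reduces
    (fun _ _ _ => reduces_locallyConfluent hP) h₁ h₂

def reductionCon (hP : CornerCondition P) : AddCon (Pt →₀ ℕ) where
  r := Join (ReflTransGen (Reduces P))
  iseqv := equivalence_join fun _ _ _ => reduces_confluent hP
  add' := join_reduces_add

end Confluence

section GroebnerBasis

variable {K : Type*} [Field K] {P : Finset Pt} {i : ℕ}

theorem exists_reduces_of_isLeadMon [IsTrans Pt (vord i)] [Std.Trichotomous (vord i)]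
    (hi : i ∈ ({1, 3, 5, 7} : Finset ℕ)) (hP : CornerCondition P) {f : MvPolynomial Pt K}
    (hf : f ∈ polyIdeal K P) {m : Pt →₀ ℕ} (hm : IsLeadMon (GrevlexLt (vord i)) f m) :
    ∃ m', Reduces P m m' := by
  classical
  by_contra! hirr
  have hbin : f ∈ Ideal.span
      {g | ∃ u v, reductionCon hP u v ∧ g = monomial u (1 : K) - monomial v 1} := by
    refine Ideal.span_mono ?_ hf
    rintro _ ⟨a, b, hab, rfl⟩
    exact ⟨_, _, ⟨_, .single ⟨0, a, b, hab, (zero_add _).symm, (zero_add _).symm⟩, .refl⟩,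
      innerMinor_eq a b⟩
  -- an irreducible monomial is the grevlex-smallest monomial of its class
  have hclass : ∀ n ∈ f.support, reductionCon hP n m → n = m := by
    rintro n hn ⟨z, hnz, hmz⟩
    obtain rfl : m = z := hmz.cases_head.resolve_right fun ⟨w, hmw, _⟩ => hirr w hmw
    by_contra hne
    exact asymm (hm.2 n hn hne) (grevlexLt_of_transGen_reduces hi
      ((reflTransGen_iff_eq_or_transGen.mp hnz).resolve_left (Ne.symm hne)))
  have hsum := sum_coeff_eq_zero_of_mem_span_binomials _ hbin m
  rw [Finset.sum_eq_single_of_mem m ?_ ?_] at hsum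
  · exact MvPolynomial.mem_support_iff.mp hm.1 hsum
  · exact Finset.mem_filter.mpr ⟨hm.1, (reductionCon hP).refl m⟩
  · intro n hn hne
    exact absurd (hclass n (Finset.mem_filter.mp hn).1 (Finset.mem_filter.mp hn).2) hne

theorem isReducedGroebnerBasis_of_cornerCondition [IsTrans Pt (vord i)]
    [Std.Trichotomous (vord i)] (hi : i ∈ ({1, 3, 5, 7} : Finset ℕ)) (hP : CornerCondition P) :
    IsReducedGroebnerBasis (GrevlexLt (vord i)) (innerMinors K P) (polyIdeal K P) := by
  refine ⟨⟨fun g hg => Ideal.subset_span hg, le_antisymm ?_ ?_⟩, ?_, ?_⟩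
  · exact lmIdeal_le_lmIdeal_iff.mpr fun f hf m hm => ⟨f, Ideal.subset_span hf, m, hm, le_rfl⟩
  · refine lmIdeal_le_lmIdeal_iff.mpr fun f hf m hm => ?_
    obtain ⟨_, u, a, b, hab, rfl, -⟩ := exists_reduces_of_isLeadMon hi hP hf hm
    exact ⟨_, ⟨a, b, hab, rfl⟩, _, isLeadMon_innerMinor hi hab.1 hab.2.1, le_add_self⟩
  · rintro _ ⟨a, b, hab, rfl⟩ m hm
    rw [hm.unique (isLeadMon_innerMinor hi hab.1 hab.2.1), innerMinor_eq, coeff_sub,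
      coeff_monomial, coeff_monomial, if_pos rfl,
      if_neg (diagMon_ne_antidiagMon hab.1 hab.2.1 hab.1 hab.2.1).symm, sub_zero]
  · rintro _ ⟨a, b, hab, rfl⟩ _ ⟨a', b', hab', rfl⟩ hne m hm m' hm' hle
    rw [hm'.unique (isLeadMon_innerMinor hi hab'.1 hab'.2.1)] at hle
    rw [innerMinor_eq, support_monomial_sub_monomial
      (diagMon_ne_antidiagMon hab.1 hab.2.1 hab.1 hab.2.1), Finset.mem_insert,
      Finset.mem_singleton] at hm
    -- both sides have degree two, so divisibility is equality
    rcases hm with rfl | rfl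
    · obtain ⟨rfl, rfl⟩ := diagMon_inj hab'.1 hab.1 (eq_of_le_of_degree_le hle (by simp))
      exact hne rfl
    · exact diagMon_ne_antidiagMon hab'.1 hab'.2.1 hab.1 hab.2.1
        (eq_of_le_of_degree_le hle (by simp [antidiagMon]))

end GroebnerBasis

section Necessity

variable {K : Type*} [Field K] {P : Finset Pt}

theorem cornerCondition_of_isGroebnerBasis
    (hGB : IsGroebnerBasis (GrevlexLt (vord 1)) (innerMinors K P) (polyIdeal K P)) :
    CornerCondition P := by
  have := vord_isStrictTotalOrder (i := 1) (by decide)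
  rintro ⟨a₁, a₂⟩ ⟨b₁, b₂⟩ ⟨e₁, e₂⟩ hab hbe
  by_contra! hfg
  have hab₁ := hab.1; have hab₂ := hab.2.1; have hbe₁ := hbe.1; have hbe₂ := hbe.2.1
  dsimp only at hab₁ hab₂ hbe₁ hbe₂
  set M₁ := single (a₁, a₂) 1 + single (b₁, e₂) 1 + single (e₁, b₂) 1
  set M₂ := single (a₁, b₂) 1 + single (b₁, a₂) 1 + single (e₁, e₂) 1
  have hmem : monomial M₁ (1 : K) - monomial M₂ 1 ∈ polyIdeal K P := by
    have hX (x y z : Pt) : monomial (single x 1 + single y 1 + single z 1) (1 : K) =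
        X x * X y * X z := by
      simp only [X, monomial_mul, one_mul]
    have : monomial M₁ (1 : K) - monomial M₂ 1 = X (e₁, e₂) * innerMinor K (a₁, a₂) (b₁, b₂) -
        X (a₁, a₂) * innerMinor K (b₁, b₂) (e₁, e₂) := by
      rw [hX, hX, innerMinor, innerMinor]
      ring
    rw [this]
    exact sub_mem (Ideal.mul_mem_left _ _ (Ideal.subset_span ⟨_, _, hab, rfl⟩))
      (Ideal.mul_mem_left _ _ (Ideal.subset_span ⟨_, _, hbe, rfl⟩))
  -- `(a₁, b₂)` is the `<¹`-smallest of the six points involved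
  have hlt : GrevlexLt (vord 1) M₂ M₁ := by
    refine Or.inr ⟨by simp [mdeg_eq_degree, M₁, M₂], (a₁, b₂), ?_, fun w hw => ?_⟩
    · simp only [M₁, M₂, Finsupp.coe_add, Pi.add_apply, single_apply, Prod.ext_iff]
      split_ifs <;> omega
    · simp only [vord] at hw
      simp only [M₁, M₂, Finsupp.coe_add, Pi.add_apply, single_apply, Prod.ext_iff]
      split_ifs <;> omega
  obtain ⟨_, ⟨a', b', hab', rfl⟩, m', hm', hle⟩ := lmIdeal_le_lmIdeal_iff.mp hGB.2.ge _ hmem M₁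
    (isLeadMon_monomial_sub_monomial (fun h => grevlexLt_irrefl _ (h ▸ hlt)) hlt)
  rw [hm'.unique (isLeadMon_innerMinor (by decide) hab'.1 hab'.2.1)] at hle
  have ha' := eq_or_eq_or_eq_of_single_le (le_self_add.trans hle)
  have hb' := eq_or_eq_or_eq_of_single_le (le_add_self.trans hle)
  have hab'₁ := hab'.1; have hab'₂ := hab'.2.1
  rcases ha' with rfl | rfl | rfl <;> rcases hb' with rfl | rfl | rfl <;>
    first | exact hfg.1 hab' | exact hfg.2 hab' | (dsimp only at hab'₁ hab'₂; omega)

end Necessity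

theorem reducedGB_odd_iff_general (K : Type*) [Field K] (P : Finset Pt) :
    (∀ i ∈ ({1, 3, 5, 7} : Finset ℕ),
        IsReducedGroebnerBasis (GrevlexLt (vord i)) (innerMinors K P)
          (polyIdeal K P)) ↔
      (∀ a b e : Pt, IsInnerInterval P a b → IsInnerInterval P b e →
        (IsInnerInterval P a (b.1, e.2) ∨ IsInnerInterval P a (e.1, b.2))) := by
  refine ⟨fun h => cornerCondition_of_isGroebnerBasis (h 1 (by simp)).1, fun hP i hi => ?_⟩
  have := vord_isStrictTotalOrder (i := i) (by fin_cases hi <;> decide)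
  exact isReducedGroebnerBasis_of_cornerCondition hi hP

/-- Proposition 2.1 (odd orders): `M` is a reduced Gröbner basis of `I_P` with
respect to `<ⁱ_grevlex` for all `i ∈ O = {1,3,5,7}` iff for any two inner
intervals `[a,b]` and `[b,e]` of `P`, one of `[a,f]`, `[a,g]` is an inner
interval of `P`, where `f, g` are the anti-diagonal corners of `[b,e]`. -/
theorem reducedGB_odd_iff (K : Type*) [Field K] (P : Finset Pt)
    (hP : IsPolyomino P) :
    (∀ i ∈ ({1, 3, 5, 7} : Finset ℕ),
        IsReducedGroebnerBasis (GrevlexLt (vord i)) (innerMinors K P)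
          (polyIdeal K P)) ↔
      (∀ a b e : Pt, IsInnerInterval P a b → IsInnerInterval P b e →
        (IsInnerInterval P a (b.1, e.2) ∨ IsInnerInterval P a (e.1, b.2))) :=
  reducedGB_odd_iff_general K P

end PolyominoPaper
end

section
/- Let P be a polyomino. If some vertex v ∈ V(P) satisfies both condition π₁ and condition π₃, then there exist four cells C, D, E, F of P with C ∩ D ∩ E ∩ F = {v}; consequently the 2×2 square polyomino is a subpolyomino of P, so P is not thin. In particular, in a thin polyomino no vertex satisfies both π₁ and π₃. -/
namespace PolyominoPaper

open MvPolynomial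

/-- If a vertex `v` of a polyomino `P` satisfies both `π₁` and `π₃`, then there
are four cells of `P` whose intersection is `{v}`; consequently the `2 × 2`
square is a subpolyomino of `P`, i.e. `P` is not thin. -/
theorem not_thin_of_pi1_and_pi3 (P : Finset Pt) (hP : IsPolyomino P)
    (v : Pt) (hv : v ∈ vertexSet P)
    (h1 : SatisfiesPi P 1 v) (h3 : SatisfiesPi P 3 v) :
    (∃ C ∈ P, ∃ D ∈ P, ∃ E ∈ P, ∃ F ∈ P,
      cellVerts C ∩ cellVerts D ∩ cellVerts E ∩ cellVerts F = {v}) ∧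
    ¬ IsThin P := by
  -- From π₁ extract: cells with v as lower-left and upper-left corners.
  have H1 : 1 ≤ v.2 ∧ (v.1, v.2 - 1) ∈ P ∧ (v.1, v.2) ∈ P := by
    obtain ⟨x₁, x₂, x₃, y₁, y₂, y₃, hx12, hx23, hy12, hy23, h⟩ := h1
    rcases h with ⟨hv, I1, I2, I3, _⟩ | ⟨hv, I1, I2, I3, _⟩
    · subst hv
      refine ⟨by omega, ?_, ?_⟩
      · have := I1.2.2 (x₁, y₂ - 1) (le_refl _) (by simpa using hx12)
          (by simp; omega) (by simp; omega)
        simpa using this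
      · have := I3.2.2 (x₁, y₂) (le_refl _) (by simp; omega) (le_refl _)
          (by simpa using hy23)
        simpa using this
    · subst hv
      refine ⟨by omega, ?_, ?_⟩
      · have := I2.2.2 (x₂, y₂ - 1) (le_refl _) (by simpa using hx23)
          (by simp; omega) (by simp; omega)
        simpa using this
      · have := I3.2.2 (x₂, y₂) (le_refl _) (by simpa using hx23) (le_refl _)
          (by simpa using hy23)
        simpa using this
  have H3 : 1 ≤ v.1 ∧ (v.1 - 1, v.2 - 1) ∈ P ∧ (v.1 - 1, v.2) ∈ P := by
    obtain ⟨x₁, x₂, x₃, y₁, y₂, y₃, hx12, hx23, hy12, hy23, h⟩ := h3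
    rcases h with ⟨hv, I1, I2, I3, _⟩ | ⟨hv, I1, I2, I3, _⟩
    · subst hv
      refine ⟨by omega, ?_, ?_⟩
      · have := I3.2.2 (x₃ - 1, y₂ - 1) (by simp; omega) (by simp; omega)
          (by simp; omega) (by simp; omega)
        simpa using this
      · have := I1.2.2 (x₃ - 1, y₂) (by simp; omega) (by simp; omega)
          (by simp) (by simpa using hy23)
        simpa using this
    · subst hv
      refine ⟨by omega, ?_, ?_⟩
      · have := I3.2.2 (x₂ - 1, y₂ - 1) (by simp; omega) (by simp; omega)
          (by simp; omega) (by simp; omega)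
        simpa using this
      · have := I2.2.2 (x₂ - 1, y₂) (by simp; omega) (by simp; omega)
          (by simp) (by simpa using hy23)
        simpa using this
  obtain ⟨hv2, hC2, hC4⟩ := H1
  obtain ⟨hv1, hC1, hC3⟩ := H3
  obtain ⟨i, j, hvij⟩ : ∃ i j : ℕ, v = (i + 1, j + 1) := by
    refine ⟨v.1 - 1, v.2 - 1, ?_⟩
    ext <;> simp <;> omega
  have e1 : (v.1 - 1, v.2 - 1) = ((i, j) : Pt) := by rw [hvij] at *; simp
  have e2 : (v.1, v.2 - 1) = ((i + 1, j) : Pt) := by rw [hvij] at *; simp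
  have e3 : (v.1 - 1, v.2) = ((i, j + 1) : Pt) := by rw [hvij] at *; simp
  have e4 : (v.1, v.2) = ((i + 1, j + 1) : Pt) := by rw [hvij]
  rw [e1] at hC1; rw [e2] at hC2; rw [e3] at hC3; rw [e4] at hC4
  constructor
  · refine ⟨(i, j), hC1, (i + 1, j), hC2, (i, j + 1), hC3, (i + 1, j + 1), hC4, ?_⟩
    rw [hvij]
    ext ⟨a, b⟩
    simp only [cellVerts, Finset.mem_inter, Finset.mem_insert, Finset.mem_singleton,
      Prod.mk.injEq, Prod.ext_iff]
    constructor
    · rintro ⟨⟨⟨h1, h2⟩, h3⟩, h4⟩ <;> omega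
    · rintro ⟨rfl, rfl⟩; omega
  · intro hT
    exact hT ⟨(i, j), hC1, hC2, hC3, hC4⟩

end PolyominoPaper
end
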